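/- arXiv:1705.01220 — 4 statements merged into one kernel-verified Lean document; each statement's English description precedes it below -/
import Mathlib

section
/- The map sending a nonempty compact convex set D ⊆ ℝⁿ to the restriction of its support function to the unit sphere S^{n-1} is an isometry from the space of nonempty compact convex subsets of ℝⁿ with the Hausdorff metric into C(S^{n-1}) with the sup norm: the Hausdorff distance between D and K equals the sup-norm distance between h_D|_{S^{n-1}} and h_K|_{S^{n-1}}. -/
open Metric MeasureTheory Set TopologicalSpace
open scoped RealInnerProductSpace

/-- The support function of a set `D ⊆ ℝⁿ`: `h_D(v) = sup {⟨x, v⟩ : x ∈ D}`. -/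
noncomputable def suppFn {n : ℕ} (D : Set (EuclideanSpace ℝ (Fin n)))
    (v : EuclideanSpace ℝ (Fin n)) : ℝ :=
  sSup ((fun x => ⟪x, v⟫) '' D)

/-!
For a unit vector `u`, `⟪x, u⟫ ≤ ⟪y, u⟫ + ‖x - y‖`; choosing `y ∈ K` nearest to `x ∈ D` gives
`h_D(u) - h_K(u) ≤ d_H(D, K)`. Conversely, if `x ∈ D \ K` and `p` is its nearest point in the
convex set `K`, then `K` lies in the half-space `⟪·, u⟫ ≤ ⟪x, u⟫ - dist(x, K)` for the unit vector
`u` pointing from `p` to `x` (obtuse angle criterion), so `dist(x, K) ≤ h_D(u) - h_K(u)`.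
-/

section InnerProductSpace

variable {E : Type*} [NormedAddCommGroup E] [InnerProductSpace ℝ E]

lemma inner_le_inner_add_dist {u : E} (hu : ‖u‖ = 1) (x y : E) :
    ⟪x, u⟫ ≤ ⟪y, u⟫ + dist x y := by
  have h : ⟪x - y, u⟫ ≤ ‖x - y‖ * ‖u‖ := real_inner_le_norm _ _
  rw [inner_sub_left, hu, mul_one, ← dist_eq_norm] at h
  linarith

lemma exists_norm_eq_one_inner_add_infDist_le {K : Set E} (hKne : K.Nonempty)
    (hKcomp : IsCompact K) (hKconv : Convex ℝ K) {x : E} (hx : x ∉ K) :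
    ∃ u : E, ‖u‖ = 1 ∧ ∀ y ∈ K, ⟪y, u⟫ + infDist x K ≤ ⟪x, u⟫ := by
  obtain ⟨p, hp, hxp⟩ := hKcomp.exists_infDist_eq_dist hKne x
  rw [dist_eq_norm] at hxp
  have hobtuse : ∀ y ∈ K, ⟪x - p, y - p⟫ ≤ 0 := by
    rw [← norm_eq_iInf_iff_real_inner_le_zero hKconv hp, ← hxp, infDist_eq_iInf]
    simp only [dist_eq_norm]
  set d := ‖x - p‖
  have hd : 0 < d := norm_pos_iff.2 (sub_ne_zero.2 fun h => hx (h ▸ hp))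
  refine ⟨d⁻¹ • (x - p), by rw [norm_smul, norm_inv, norm_norm, inv_mul_cancel₀ hd.ne'], ?_⟩
  intro y hy
  have hsplit : ⟪x - y, x - p⟫ = d ^ 2 - ⟪x - p, y - p⟫ := by
    rw [← real_inner_self_eq_norm_sq, ← inner_sub_right, real_inner_comm]
    congr 1
    abel
  have key : d ≤ d⁻¹ * ⟪x - y, x - p⟫ := by
    rw [le_inv_mul_iff₀ hd, hsplit, ← sq]
    linarith [hobtuse y hy]
  rw [inner_sub_left, mul_sub] at key
  rw [hxp, real_inner_smul_right, real_inner_smul_right]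
  linarith

end InnerProductSpace

section SupportFunction

variable {n : ℕ} {D K : Set (EuclideanSpace ℝ (Fin n))}

lemma inner_le_suppFn (hD : IsCompact D) {x : EuclideanSpace ℝ (Fin n)} (hx : x ∈ D)
    (v : EuclideanSpace ℝ (Fin n)) : ⟪x, v⟫ ≤ suppFn D v :=
  le_csSup (hD.image (continuous_id.inner continuous_const)).bddAbove ⟨x, hx, rfl⟩

lemma suppFn_le (hD : D.Nonempty) {v : EuclideanSpace ℝ (Fin n)} {c : ℝ}
    (h : ∀ x ∈ D, ⟪x, v⟫ ≤ c) : suppFn D v ≤ c :=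
  csSup_le (hD.image _) (forall_mem_image.2 h)

lemma suppFn_sub_le_hausdorffDist (hDne : D.Nonempty) (hDb : Bornology.IsBounded D)
    (hKne : K.Nonempty) (hKcomp : IsCompact K) {u : EuclideanSpace ℝ (Fin n)} (hu : ‖u‖ = 1) :
    suppFn D u - suppFn K u ≤ hausdorffDist D K := by
  have hfin := hausdorffEDist_ne_top_of_nonempty_of_bounded hDne hKne hDb hKcomp.isBounded
  rw [sub_le_iff_le_add']
  refine suppFn_le hDne fun x hx => ?_
  obtain ⟨y, hy, hxy⟩ := hKcomp.exists_infDist_eq_dist hKne x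
  calc ⟪x, u⟫ ≤ ⟪y, u⟫ + dist x y := inner_le_inner_add_dist hu x y
    _ ≤ suppFn K u + hausdorffDist D K := by
      gcongr
      · exact inner_le_suppFn hKcomp hy u
      · exact hxy ▸ infDist_le_hausdorffDist_of_mem hx hfin

lemma infDist_le_of_forall_suppFn_sub_le (hDcomp : IsCompact D) (hKne : K.Nonempty)
    (hKcomp : IsCompact K) (hKconv : Convex ℝ K) {c : ℝ} (hc₀ : 0 ≤ c)
    (hc : ∀ u : EuclideanSpace ℝ (Fin n), ‖u‖ = 1 → suppFn D u - suppFn K u ≤ c)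
    {x : EuclideanSpace ℝ (Fin n)} (hx : x ∈ D) : infDist x K ≤ c := by
  by_cases hxK : x ∈ K
  · rwa [infDist_zero_of_mem hxK]
  obtain ⟨u, hu, hsep⟩ := exists_norm_eq_one_inner_add_infDist_le hKne hKcomp hKconv hxK
  have hK : suppFn K u + infDist x K ≤ suppFn D u := by
    rw [← le_sub_iff_add_le]
    exact suppFn_le hKne fun y hy =>
      le_sub_iff_add_le.2 ((hsep y hy).trans (inner_le_suppFn hDcomp hx u))
  linarith [hc u hu]

end SupportFunction

theorem hausdorffDist_eq_sup_suppFn_general (n : ℕ)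
    (D K : Set (EuclideanSpace ℝ (Fin n)))
    (hDne : D.Nonempty) (hDcomp : IsCompact D) (hDconv : Convex ℝ D)
    (hKne : K.Nonempty) (hKcomp : IsCompact K) (hKconv : Convex ℝ K) :
    hausdorffDist D K =
      ⨆ u : sphere (0 : EuclideanSpace ℝ (Fin n)) 1,
        |suppFn D (u : EuclideanSpace ℝ (Fin n)) - suppFn K (u : EuclideanSpace ℝ (Fin n))| := by
  set S := ⨆ u : sphere (0 : EuclideanSpace ℝ (Fin n)) 1,
    |suppFn D (u : EuclideanSpace ℝ (Fin n)) - suppFn K (u : EuclideanSpace ℝ (Fin n))|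
  have hle : ∀ u : sphere (0 : EuclideanSpace ℝ (Fin n)) 1,
      |suppFn D u - suppFn K u| ≤ hausdorffDist D K := fun u => by
    have hu : ‖(u : EuclideanSpace ℝ (Fin n))‖ = 1 := mem_sphere_zero_iff_norm.1 u.2
    refine abs_sub_le_iff.2 ⟨?_, ?_⟩
    · exact suppFn_sub_le_hausdorffDist hDne hDcomp.isBounded hKne hKcomp hu
    · rw [hausdorffDist_comm]
      exact suppFn_sub_le_hausdorffDist hKne hKcomp.isBounded hDne hDcomp hu
  have hS : ∀ u : EuclideanSpace ℝ (Fin n), ‖u‖ = 1 → |suppFn D u - suppFn K u| ≤ S :=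
    fun u hu => le_ciSup (f := fun u : sphere (0 : EuclideanSpace ℝ (Fin n)) 1 =>
      |suppFn D u - suppFn K u|) ⟨_, forall_mem_range.2 hle⟩ ⟨u, mem_sphere_zero_iff_norm.2 hu⟩
  have hS₀ : 0 ≤ S := Real.iSup_nonneg fun _ => abs_nonneg _
  refine le_antisymm (hausdorffDist_le_of_infDist hS₀ ?_ ?_) (Real.iSup_le hle hausdorffDist_nonneg)
  · exact fun x => infDist_le_of_forall_suppFn_sub_le hDcomp hKne hKcomp hKconv hS₀
      fun u hu => (le_abs_self _).trans (hS u hu)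
  · exact fun x => infDist_le_of_forall_suppFn_sub_le hKcomp hDne hDcomp hDconv hS₀
      fun u hu => (le_abs_self _).trans ((abs_sub_comm _ _).trans_le (hS u hu))

/-- the support-function map is an isometry: the Hausdorff distance of two
nonempty compact convex sets equals the sup-norm distance of their support functions
restricted to the unit sphere. -/
theorem hausdorffDist_eq_sup_suppFn (n : ℕ) (hn : 2 ≤ n)
    (D K : Set (EuclideanSpace ℝ (Fin n)))
    (hDne : D.Nonempty) (hDcomp : IsCompact D) (hDconv : Convex ℝ D)
    (hKne : K.Nonempty) (hKcomp : IsCompact K) (hKconv : Convex ℝ K) :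
    hausdorffDist D K =
      ⨆ u : sphere (0 : EuclideanSpace ℝ (Fin n)) 1,
        |suppFn D (u : EuclideanSpace ℝ (Fin n)) - suppFn K (u : EuclideanSpace ℝ (Fin n))| :=
  hausdorffDist_eq_sup_suppFn_general n D K hDne hDcomp hDconv hKne hKcomp hKconv
end

section
/- The set of line segments (possibly degenerate to a point) in ℝⁿ with Steiner point at the origin, topologized by the Hausdorff metric, is homeomorphic to the quotient ℝⁿ/{±1} (the open cone over ℝP^{n-1}). -/
open Metric MeasureTheory Set TopologicalSpace
open scoped RealInnerProductSpace Pointwise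

/-! The map `v ↦ [-v, v]` from `E` to its hyperspace of compacta is 1-Lipschitz and satisfies
`‖v‖ ≤ d_H([-v, v], {0})`, so it is proper; hence its corestriction onto the centred segments is
a closed continuous surjection, i.e. a quotient map. Its fibres are exactly the pairs `{v, -v}`,
so it descends to a homeomorphism from `E/{±1}`. -/

theorem Topology.IsQuotientMap.isHomeomorph_quot_lift {X Y : Type*} [TopologicalSpace X]
    [TopologicalSpace Y] {r : X → X → Prop} {f : X → Y} (hf : IsQuotientMap f)
    (hr : ∀ a b, r a b → f a = f b) (hker : ∀ a b, f a = f b → Quot.mk r a = Quot.mk r b) :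
    IsHomeomorph (Quot.lift f hr) := by
  refine isHomeomorph_iff_isQuotientMap_injective.2
    ⟨isQuotientMap_quot_mk.of_comp_isQuotientMap hf, ?_⟩
  rintro ⟨a⟩ ⟨b⟩ hab
  exact hker a b hab

section CenteredSegment

variable {E : Type*} [NormedAddCommGroup E] [NormedSpace ℝ E]

theorem segment_neg_self_eq_image (v : E) :
    segment ℝ (-v) v = (· • v) '' Icc (-1 : ℝ) 1 := by
  simpa [segment_eq_Icc] using
    (image_segment ℝ (LinearMap.toSpanSingleton ℝ E v).toAffineMap (-1) 1).symm

theorem eq_or_eq_neg_of_segment_neg_self_eq {v w : E}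
    (h : segment ℝ (-v) v = segment ℝ (-w) w) : v = w ∨ v = -w := by
  have hv : v ∈ segment ℝ (-w) w := h ▸ right_mem_segment ℝ (-v) v
  have hw : w ∈ segment ℝ (-v) v := h ▸ right_mem_segment ℝ (-w) w
  rw [segment_neg_self_eq_image] at hv hw
  obtain ⟨s, hs, hsv : s • w = v⟩ := hv
  obtain ⟨t, ht, htw : t • v = w⟩ := hw
  rcases eq_or_ne w 0 with rfl | hw0
  · simp [← hsv]
  have hs1 : |s| ≤ 1 := abs_le.2 hs
  have ht1 : |t| ≤ 1 := abs_le.2 ht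
  have hv_norm : ‖v‖ = |s| * ‖w‖ := by rw [← hsv, norm_smul, Real.norm_eq_abs]
  have hw_norm : ‖w‖ = |t| * ‖v‖ := by rw [← htw, norm_smul, Real.norm_eq_abs]
  have hw_pos : 0 < ‖w‖ := norm_pos_iff.2 hw0
  -- `‖w‖ = |t| |s| ‖w‖` forces `|s| |t| = 1`, with both factors at most `1`.
  have habs : |s| = 1 := by nlinarith [abs_nonneg s, abs_nonneg t, norm_nonneg v]
  rcases (abs_eq zero_le_one).1 habs with rfl | rfl <;> simp [← hsv]

variable (E) in
noncomputable def centeredSegment (v : E) : NonemptyCompacts E :=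
  ⟨⟨segment ℝ (-v) v, by
    rw [segment_neg_self_eq_image]; exact isCompact_Icc.image (by fun_prop)⟩,
    ⟨v, right_mem_segment ℝ (-v) v⟩⟩

@[simp]
theorem coe_centeredSegment (v : E) : (centeredSegment E v : Set E) = segment ℝ (-v) v := rfl

theorem centeredSegment_eq_iff {v w : E} :
    centeredSegment E v = centeredSegment E w ↔ v = w ∨ v = -w := by
  refine ⟨fun h => eq_or_eq_neg_of_segment_neg_self_eq
    (congrArg (fun S : NonemptyCompacts E => (S : Set E)) h), ?_⟩
  rintro (rfl | rfl)
  · rfl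
  · exact NonemptyCompacts.ext (by simp [segment_symm])

theorem lipschitzWith_centeredSegment : LipschitzWith 1 (centeredSegment E) := by
  refine LipschitzWith.of_dist_le_mul fun v w => ?_
  have close : ∀ a b : E, ∀ x ∈ segment ℝ (-a) a,
      ∃ y ∈ segment ℝ (-b) b, dist x y ≤ dist a b := by
    intro a b x hx
    rw [segment_neg_self_eq_image] at hx
    obtain ⟨t, ht, rfl⟩ := hx
    refine ⟨t • b, by rw [segment_neg_self_eq_image]; exact ⟨t, ht, rfl⟩, ?_⟩
    rw [dist_eq_norm, dist_eq_norm, ← smul_sub, norm_smul, Real.norm_eq_abs]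
    exact mul_le_of_le_one_left (norm_nonneg _) (abs_le.2 ht)
  rw [NNReal.coe_one, one_mul, NonemptyCompacts.dist_eq, coe_centeredSegment,
    coe_centeredSegment]
  refine hausdorffDist_le_of_mem_dist dist_nonneg (close v w) fun y hy => ?_
  simpa only [dist_comm w v] using close w v y hy

theorem norm_le_dist_centeredSegment_zero (v : E) :
    ‖v‖ ≤ dist (centeredSegment E v) (centeredSegment E 0) := by
  have := infDist_le_hausdorffDist_of_mem (right_mem_segment ℝ (-v) v)
    (edist_ne_top (centeredSegment E v) (centeredSegment E 0))
  simpa [NonemptyCompacts.dist_eq, segment_same] using this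

theorem isProperMap_centeredSegment [ProperSpace E] : IsProperMap (centeredSegment E) := by
  have hcont := lipschitzWith_centeredSegment (E := E).continuous
  refine isProperMap_iff_isCompact_preimage.2 ⟨hcont, fun K hK => ?_⟩
  obtain ⟨r, hr⟩ := hK.isBounded.subset_closedBall (centeredSegment E 0)
  refine (isCompact_closedBall (0 : E) r).of_isClosed_subset (hK.isClosed.preimage hcont)
    fun v hv => mem_closedBall_zero_iff.2 ?_
  exact (norm_le_dist_centeredSegment_zero v).trans (hr hv)

end CenteredSegment

theorem segments_homeomorphic_cone_general (n : ℕ) :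
    Nonempty
      ({S : NonemptyCompacts (EuclideanSpace ℝ (Fin n)) //
          ∃ v : EuclideanSpace ℝ (Fin n),
            (S : Set (EuclideanSpace ℝ (Fin n))) = segment ℝ (-v) v} ≃ₜ
        Quot (fun x y : EuclideanSpace ℝ (Fin n) => x = -y)) := by
  set E := EuclideanSpace ℝ (Fin n)
  let f : E → {S : NonemptyCompacts E // ∃ v : E, (S : Set E) = segment ℝ (-v) v} :=
    fun v => ⟨centeredSegment E v, v, rfl⟩
  have hf_cont : Continuous f := lipschitzWith_centeredSegment.continuous.subtype_mk _
  have hf_proper : IsProperMap f := isProperMap_of_comp_of_inj hf_cont continuous_subtype_val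
    isProperMap_centeredSegment Subtype.val_injective
  have hf_surj : Function.Surjective f := fun ⟨S, v, hS⟩ =>
    ⟨v, Subtype.ext (NonemptyCompacts.ext hS.symm)⟩
  have hf_fibres (a b : E) : f a = f b ↔ a = b ∨ a = -b :=
    Subtype.ext_iff.trans centeredSegment_eq_iff
  have hf_homeo := (hf_proper.isClosedMap.isQuotientMap hf_cont hf_surj).isHomeomorph_quot_lift
    (r := fun x y : E => x = -y) (fun a b hab => (hf_fibres a b).2 (Or.inr hab))
    fun a b hab => ((hf_fibres a b).1 hab).elim (congrArg _) fun h => Quot.sound h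
  exact ⟨(hf_homeo.homeomorph _).symm⟩

/-- the hyperspace of line segments (possibly degenerate) in `ℝⁿ` with
Steiner point (midpoint) at the origin, with the Hausdorff metric, is homeomorphic to the
quotient `ℝⁿ/{±1}`, the open cone over `ℝP^{n-1}`. -/
theorem segments_homeomorphic_cone (n : ℕ) (hn : 2 ≤ n) :
    Nonempty
      ({S : NonemptyCompacts (EuclideanSpace ℝ (Fin n)) //
          ∃ v : EuclideanSpace ℝ (Fin n),
            (S : Set (EuclideanSpace ℝ (Fin n))) = segment ℝ (-v) v} ≃ₜ
        Quot (fun x y : EuclideanSpace ℝ (Fin n) => x = -y)) :=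
  segments_homeomorphic_cone_general n
end

section
/- The hyperspace K_s^{0≤1} of convex compacta of dimension at most 1 in ℝⁿ with Steiner point at the origin is a Z-set in K_s: every continuous map from the Hilbert cube Q to K_s can be uniformly approximated by a continuous map whose image misses K_s^{0≤1}. -/
/-! Replace every set `S` by its closed `δ`-neighbourhood `S + δ Bⁿ`, with `δ = ε / 2`.
This map is `1`-Lipschitz for the Hausdorff metric and moves each set by at most `δ`. It
preserves convexity and the Steiner point: on the unit sphere the support function just gains
the constant `δ`, and `∫ u dσ(u) = 0` by antipodal symmetry. Every `S + δ Bⁿ` has interior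
points, so for `n ≥ 2` it lies in no line. -/

open Metric MeasureTheory Set TopologicalSpace
open scoped RealInnerProductSpace Pointwise

/-- The Steiner point `s(D) = (1/vol Bⁿ) ∫_{S^{n-1}} h_D(u) • u dσ(u)`,
where `σ` is the spherical (surface) measure on the unit sphere. -/
noncomputable def steiner {n : ℕ} (D : Set (EuclideanSpace ℝ (Fin n))) :
    EuclideanSpace ℝ (Fin n) :=
  (volume (closedBall (0 : EuclideanSpace ℝ (Fin n)) 1)).toReal⁻¹ •
    ∫ u : sphere (0 : EuclideanSpace ℝ (Fin n)) 1,
      suppFn D (u : EuclideanSpace ℝ (Fin n)) • (u : EuclideanSpace ℝ (Fin n))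
      ∂((volume : Measure (EuclideanSpace ℝ (Fin n))).toSphere)

namespace MeasureTheory.Measure

variable {E : Type*} [NormedAddCommGroup E] [NormedSpace ℝ E] [MeasurableSpace E] [BorelSpace E]
  (μ : Measure E) [μ.IsNegInvariant]

instance toSphere.isNegInvariant : μ.toSphere.IsNegInvariant where
  neg_eq_self := by
    refine ext fun s hs => ?_
    have hcoe : ((↑) '' (Neg.neg ⁻¹' s) : Set E) = -((↑) '' s) := by
      ext x
      constructor
      · rintro ⟨u, hu, rfl⟩
        exact ⟨-u, hu, rfl⟩
      · rintro ⟨u, hu, hux⟩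
        exact ⟨-u, by simpa using hu, by simp [coe_neg_sphere, hux]⟩
    rw [neg_def, map_apply continuous_neg.measurable hs,
      toSphere_apply' _ (continuous_neg.measurable hs), toSphere_apply' _ hs, hcoe, Set.smul_neg,
      measure_neg]

theorem integral_coe_toSphere_eq_zero : ∫ u, (u : E) ∂μ.toSphere = 0 := by
  have h := (Homeomorph.neg (sphere (0 : E) 1)).measurableEmbedding.integral_map
    (μ := μ.toSphere) ((↑) : sphere (0 : E) 1 → E)
  simp only [Homeomorph.coe_neg, map_neg_eq_self, coe_neg_sphere, integral_neg] at h
  rw [eq_neg_iff_add_eq_zero, ← two_smul ℝ, smul_eq_zero] at h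
  exact h.resolve_left two_ne_zero

end MeasureTheory.Measure

theorem not_subset_affineSpan_pair {V P : Type*} [NormedAddCommGroup V] [NormedSpace ℝ V]
    [MetricSpace P] [NormedAddTorsor V P] [FiniteDimensional ℝ V]
    (hV : 2 ≤ Module.finrank ℝ V) {s : Set P} (hs : (interior s).Nonempty) (a b : P) :
    ¬ s ⊆ affineSpan ℝ {a, b} := by
  intro hsub
  have htop : affineSpan ℝ {a, b} = ⊤ :=
    top_unique <| isOpen_interior.affineSpan_eq_top hs ▸
      affineSpan_le.2 (interior_subset.trans hsub)
  have := collinear_iff_finrank_le_one.1 (collinear_pair ℝ a b)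
  rw [← direction_affineSpan, htop, AffineSubspace.direction_top, finrank_top] at this
  omega

theorem interior_cthickening_nonempty {α : Type*} [PseudoMetricSpace α] {s : Set α}
    (hs : s.Nonempty) {δ : ℝ} (hδ : 0 < δ) : (interior (cthickening δ s)).Nonempty :=
  let ⟨x, hx⟩ := hs
  ⟨x, thickening_subset_interior_cthickening δ s (ball_subset_thickening hx δ (mem_ball_self hδ))⟩

theorem hausdorffEDist_self_cthickening_le {α : Type*} [PseudoEMetricSpace α] (s : Set α)
    (δ : ℝ) : hausdorffEDist s (cthickening δ s) ≤ ENNReal.ofReal δ :=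
  hausdorffEDist_le_of_infEDist
    (fun x hx => by simp [infEDist_zero_of_mem (self_subset_cthickening s hx)])
    (fun _ hx => mem_cthickening_iff.1 hx)

theorem hausdorffEDist_cthickening_le {E : Type*} [SeminormedAddCommGroup E] [NormedSpace ℝ E]
    (δ : ℝ) (s t : Set E) :
    hausdorffEDist (cthickening δ s) (cthickening δ t) ≤ hausdorffEDist s t := by
  have key : ∀ s t : Set E, ∀ x ∈ cthickening δ s,
      infEDist x (cthickening δ t) ≤ hausdorffEDist s t := fun s t x hx => by
    rw [infEDist_cthickening, tsub_le_iff_left]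
    calc infEDist x t ≤ infEDist x s + hausdorffEDist s t :=
          infEDist_le_infEDist_add_hausdorffEDist
      _ ≤ ENNReal.ofReal δ + hausdorffEDist s t := by gcongr; exact mem_cthickening_iff.1 hx
  exact hausdorffEDist_le_of_infEDist (key s t) fun x hx =>
    hausdorffEDist_comm (s := s) ▸ key t s x hx

section

variable {n : ℕ}

theorem suppFn_cthickening {A : Set (EuclideanSpace ℝ (Fin n))} (hA : IsCompact A)
    (hne : A.Nonempty) {δ : ℝ} (hδ : 0 ≤ δ) {v : EuclideanSpace ℝ (Fin n)} (hv : ‖v‖ = 1) :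
    suppFn (cthickening δ A) v = suppFn A v + δ := by
  obtain ⟨x₀, hx₀A, hx₀⟩ := hA.exists_isMaxOn hne
    (continuous_id.inner continuous_const : Continuous fun x => ⟪x, v⟫).continuousOn
  have hmaxA : IsGreatest ((fun x => ⟪x, v⟫) '' A) ⟪x₀, v⟫ :=
    ⟨mem_image_of_mem _ hx₀A, forall_mem_image.2 hx₀⟩
  have hmax : IsGreatest ((fun x => ⟪x, v⟫) '' (A + closedBall 0 δ)) (⟪x₀, v⟫ + δ) := by
    refine ⟨⟨x₀ + δ • v, add_mem_add hx₀A ?_, ?_⟩, ?_⟩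
    · simp [norm_smul, hv, abs_of_nonneg hδ]
    · simp [inner_add_left, real_inner_smul_left, hv]
    · rintro _ ⟨_, ⟨x, hx, w, hw, rfl⟩, rfl⟩
      have hw' : ⟪w, v⟫ ≤ δ := (real_inner_le_norm w v).trans (by simpa [hv] using hw)
      have hx' : ⟪x, v⟫ ≤ ⟪x₀, v⟫ := hx₀ hx
      simp only [inner_add_left]
      linarith
  rw [← hA.add_closedBall_zero hδ, suppFn, suppFn, hmax.csSup_eq, hmaxA.csSup_eq]

theorem steiner_cthickening {A : Set (EuclideanSpace ℝ (Fin n))} (hA : IsCompact A)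
    (hne : A.Nonempty) {δ : ℝ} (hδ : 0 ≤ δ) : steiner (cthickening δ A) = steiner A := by
  set σ := (volume : Measure (EuclideanSpace ℝ (Fin n))).toSphere
  have hshift : ∀ u : sphere (0 : EuclideanSpace ℝ (Fin n)) 1,
      suppFn (cthickening δ A) u • (u : EuclideanSpace ℝ (Fin n)) =
        suppFn A u • (u : EuclideanSpace ℝ (Fin n)) + δ • (u : EuclideanSpace ℝ (Fin n)) :=
    fun u => by rw [suppFn_cthickening hA hne hδ (norm_eq_of_mem_sphere u), add_smul]
  have hint : Integrable (fun u : sphere (0 : EuclideanSpace ℝ (Fin n)) 1 =>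
      δ • (u : EuclideanSpace ℝ (Fin n))) σ :=
    (by fun_prop : Continuous _).integrable_of_hasCompactSupport
      (HasCompactSupport.of_compactSpace _)
  have hzero : ∫ u, δ • (u : EuclideanSpace ℝ (Fin n)) ∂σ = 0 := by
    rw [integral_smul, Measure.integral_coe_toSphere_eq_zero, smul_zero]
  unfold steiner
  simp_rw [hshift]
  by_cases hF : Integrable (fun u : sphere (0 : EuclideanSpace ℝ (Fin n)) 1 =>
      suppFn A u • (u : EuclideanSpace ℝ (Fin n))) σ
  · rw [integral_add hF hint, hzero, add_zero]
  · have hF' : ¬ Integrable (fun u : sphere (0 : EuclideanSpace ℝ (Fin n)) 1 =>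
        suppFn A u • (u : EuclideanSpace ℝ (Fin n)) + δ • (u : EuclideanSpace ℝ (Fin n))) σ :=
      fun h => hF ((h.sub hint).congr (.of_forall fun u => by simp))
    rw [integral_undef hF, integral_undef hF']

/-- The hyperspace `K_s`. -/
abbrev SteinerCentredConvexCompacts (n : ℕ) : Type :=
  {S : NonemptyCompacts (EuclideanSpace ℝ (Fin n)) //
    Convex ℝ (S : Set (EuclideanSpace ℝ (Fin n))) ∧ steiner (S : Set (EuclideanSpace ℝ (Fin n))) = 0}

namespace SteinerCentredConvexCompacts

variable {δ : ℝ}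

noncomputable def thicken (hδ : 0 ≤ δ) (S : SteinerCentredConvexCompacts n) :
    SteinerCentredConvexCompacts n :=
  ⟨⟨⟨cthickening δ S.1, S.1.isCompact.cthickening⟩, S.1.nonempty.mono (self_subset_cthickening _)⟩,
    S.2.1.cthickening δ, (steiner_cthickening S.1.isCompact S.1.nonempty hδ).trans S.2.2⟩

theorem lipschitzWith_one_thicken (hδ : 0 ≤ δ) :
    LipschitzWith 1 (thicken (n := n) hδ) :=
  LipschitzWith.of_edist_le fun S T =>
    hausdorffEDist_cthickening_le δ (S.1 : Set (EuclideanSpace ℝ (Fin n))) T.1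

theorem dist_thicken_le (hδ : 0 ≤ δ) (S : SteinerCentredConvexCompacts n) :
    dist S (thicken hδ S) ≤ δ :=
  ENNReal.toReal_le_of_le_ofReal hδ (hausdorffEDist_self_cthickening_le _ δ)

theorem interior_thicken_nonempty (hδ : 0 < δ) (S : SteinerCentredConvexCompacts n) :
    (interior ((thicken hδ.le S).1 : Set (EuclideanSpace ℝ (Fin n)))).Nonempty :=
  interior_cthickening_nonempty S.1.nonempty hδ

end SteinerCentredConvexCompacts

end

/-- the convex compacta of affine dimension at most 1 with Steiner point at
the origin form a Z-set in `K_s`: every map of the Hilbert cube into `K_s` can be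
uniformly approximated by maps whose images consist of sets not contained in any line. -/
theorem dim_le_one_is_Zset (n : ℕ) (hn : 2 ≤ n) :
    ∀ ε : ℝ, 0 < ε →
    ∀ f : (ℕ → Set.Icc (-1 : ℝ) 1) →
        {S : NonemptyCompacts (EuclideanSpace ℝ (Fin n)) //
          Convex ℝ (S : Set (EuclideanSpace ℝ (Fin n))) ∧
          steiner (S : Set (EuclideanSpace ℝ (Fin n))) = 0},
      Continuous f →
      ∃ g : (ℕ → Set.Icc (-1 : ℝ) 1) →
          {S : NonemptyCompacts (EuclideanSpace ℝ (Fin n)) //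
            Convex ℝ (S : Set (EuclideanSpace ℝ (Fin n))) ∧
            steiner (S : Set (EuclideanSpace ℝ (Fin n))) = 0},
        Continuous g ∧ (∀ q, dist (f q) (g q) < ε) ∧
        ∀ q, ¬ ∃ a b : EuclideanSpace ℝ (Fin n),
          ((g q).1 : Set (EuclideanSpace ℝ (Fin n))) ⊆
            (affineSpan ℝ ({a, b} : Set (EuclideanSpace ℝ (Fin n))) :
              Set (EuclideanSpace ℝ (Fin n))) := by
  intro ε hε f hf
  have hδ : 0 < ε / 2 := half_pos hε
  refine ⟨SteinerCentredConvexCompacts.thicken hδ.le ∘ f,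
    (SteinerCentredConvexCompacts.lipschitzWith_one_thicken hδ.le).continuous.comp hf,
    fun q => (SteinerCentredConvexCompacts.dist_thicken_le hδ.le (f q)).trans_lt
      (half_lt_self hε),
    fun q ⟨a, b, hsub⟩ => ?_⟩
  exact not_subset_affineSpan_pair (by rwa [finrank_euclideanSpace_fin])
    (SteinerCentredConvexCompacts.interior_thicken_nonempty hδ (f q)) a b hsub
end

section
/- Every σ-compact subset of the space Σ^ℕ has empty interior, where Σ = {(t_i) ∈ [−1,1]^ℕ : sup_i |t_i| < 1}. -/
open Set Topology

/-!
A compact subset of `Σ^ℕ` has compact, hence proper, projections, because `Σ` is not compact: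
the first coordinate gets arbitrarily close to `1` on `Σ` without reaching it. A neighbourhood
in a product constrains only finitely many coordinates, so given compact sets `K₀, K₁, …` we may
assign to each `Kₙ` its own free coordinate `iₙ` and choose a point of the neighbourhood whose
`iₙ`-th coordinate avoids the projection of `Kₙ`; it lies in no `Kₙ`.
-/

theorem Set.Finite.exists_surjOn_compl {ι : Type*} [Infinite ι] {I : Set ι} (hI : I.Finite) :
    ∃ g : ι → ℕ, SurjOn g Iᶜ univ := by
  let e := hI.infinite_compl.natEmbedding
  have he : Function.Injective fun n => (e n : ι) := Subtype.val_injective.comp e.injective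
  exact ⟨Function.invFun fun n => (e n : ι),
    fun n _ => ⟨e n, (e n).2, Function.leftInverse_invFun he n⟩⟩

section Pi

variable {ι : Type*} {X : ι → Type*} [∀ i, TopologicalSpace (X i)]

theorem exists_finite_of_mem_nhds_pi {A : Set (∀ i, X i)} {x : ∀ i, X i}
    (hA : A ∈ 𝓝 x) : ∃ I : Set ι, I.Finite ∧ ∀ y, (∀ i ∈ I, y i = x i) → y ∈ A := by
  rw [nhds_pi, Filter.mem_pi] at hA
  obtain ⟨I, hI, t, ht, htA⟩ := hA
  exact ⟨I, hI, fun y hy => htA fun i hi => hy i hi ▸ mem_of_mem_nhds (ht i)⟩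

theorem IsSigmaCompact.interior_eq_empty_of_pi [Infinite ι] [∀ i, NoncompactSpace (X i)]
    {A : Set (∀ i, X i)} (hA : IsSigmaCompact A) : interior A = ∅ := by
  classical
  obtain ⟨K, hK, rfl⟩ := hA
  refine eq_empty_iff_forall_notMem.2 fun x hx => ?_
  obtain ⟨I, hI, hIA⟩ :=
    exists_finite_of_mem_nhds_pi (mem_interior_iff_mem_nhds.1 hx)
  obtain ⟨g, hg⟩ := hI.exists_surjOn_compl
  choose z hz using fun i =>
    (ne_univ_iff_exists_notMem _).1 ((hK (g i)).image (continuous_apply i)).ne_univ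
  obtain ⟨_, ⟨n, rfl⟩, hyK⟩ := hIA (I.piecewise x z) fun i hi => piecewise_eq_of_mem _ _ _ hi
  obtain ⟨i, hiI, rfl⟩ := hg (mem_univ n)
  exact hz i ⟨_, hyK, piecewise_eq_of_notMem _ _ _ hiI⟩

def Homeomorph.subtypePiEquivPi {p : ∀ i, X i → Prop} :
    {f : ∀ i, X i // ∀ i, p i (f i)} ≃ₜ ∀ i, {x // p i x} where
  toEquiv := Equiv.subtypePiEquivPi
  continuous_toFun :=
    continuous_pi fun i => ((continuous_apply i).comp continuous_subtype_val).subtype_mk _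
  continuous_invFun :=
    (continuous_pi fun i => continuous_subtype_val.comp (continuous_apply i)).subtype_mk _

end Pi

namespace HilbertCube

def radialInterior : Set (ℕ → Icc (-1 : ℝ) 1) := {t | ⨆ i, |(t i : ℝ)| < 1}

theorem coe_lt_one_of_mem_radialInterior {t : ℕ → Icc (-1 : ℝ) 1} (ht : t ∈ radialInterior)
    (i : ℕ) : (t i : ℝ) < 1 := by
  have hbdd : BddAbove (range fun i => |(t i : ℝ)|) :=
    ⟨1, forall_mem_range.2 fun i => abs_le.2 (t i).2⟩
  calc (t i : ℝ) ≤ |(t i : ℝ)| := le_abs_self _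
    _ ≤ ⨆ i, |(t i : ℝ)| := le_ciSup hbdd i
    _ < 1 := ht

theorem const_mem_radialInterior {c : ℝ} (hc : c ∈ Ioo (-1) 1) :
    (fun _ => ⟨c, Ioo_subset_Icc_self hc⟩ : ℕ → Icc (-1 : ℝ) 1) ∈ radialInterior := by
  simpa [radialInterior, abs_lt] using hc

instance : NoncompactSpace radialInterior := by
  refine ⟨fun hcpt => ?_⟩
  have : Nonempty radialInterior := ⟨⟨_, const_mem_radialInterior (c := 0) (by norm_num)⟩⟩
  obtain ⟨t, -, hmax⟩ := hcpt.exists_isMaxOn univ_nonempty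
    (continuous_subtype_val.comp ((continuous_apply 0).comp continuous_subtype_val)).continuousOn
  set a : ℝ := ((t : ℕ → Icc (-1 : ℝ) 1) 0 : ℝ)
  have hlt : a < 1 := coe_lt_one_of_mem_radialInterior t.2 0
  have hge : -1 ≤ a := ((t : ℕ → Icc (-1 : ℝ) 1) 0).2.1
  have hmid : (a + 1) / 2 ∈ Ioo (-1) 1 := ⟨by linarith, by linarith⟩
  have hle : (a + 1) / 2 ≤ a := hmax (mem_univ ⟨_, const_mem_radialInterior hmid⟩)
  linarith

end HilbertCube

open HilbertCube in
/-- every σ-compact subset of `Σ^ℕ` has empty interior, where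
`Σ = {t ∈ [-1,1]^ℕ : sup_i |t_i| < 1}` is the radial interior of the Hilbert cube. -/
theorem sigmaCompact_subset_of_power_has_empty_interior
    (A : Set {f : ℕ → (ℕ → Set.Icc (-1 : ℝ) 1) // ∀ j, (⨆ i, |(f j i : ℝ)|) < 1}) :
    IsSigmaCompact A → interior A = ∅ := by
  intro hA
  let e : {f : ℕ → (ℕ → Icc (-1 : ℝ) 1) // ∀ j, f j ∈ radialInterior} ≃ₜ (ℕ → radialInterior) :=
    Homeomorph.subtypePiEquivPi
  exact image_eq_empty.1 <|
    (e.image_interior A).trans (hA.image e.continuous).interior_eq_empty_of_pi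
end
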